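/- arXiv:1803.05465 — 2 statements merged into one kernel-verified Lean document; each statement's English description precedes it below -/
import Mathlib

section
/- Let T : ℕ → ℝ≥0 satisfy T(n) ≤ 2·4^{c√(ℓn)}·( T(⌈2n/3⌉ + c′·√(ℓn)) + c″·n ) for all n greater than some constant n₀ (depending on ℓ), with T(n) bounded by a constant for n ≤ n₀, where c, c′, c″ > 0 and ℓ ≥ 1 are constants. Then T(n) = 2^{O(√(ℓn)·log n)}. -/
set_option maxHeartbeats 1000000


/-- If `T : ℕ → ℝ≥0` satisfies
`T(n) ≤ 2·4^{c√(ℓn)}·(T(⌈2n/3⌉ + c′√(ℓn)) + c″·n)` for all `n > n₀` and is bounded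
by a constant for `n ≤ n₀`, where `c, c′, c″ > 0` and `ℓ ≥ 1`, then
`T(n) = 2^{O(√(ℓn)·log n)}`. -/
theorem subexponential_recurrence (T : ℕ → ℝ) (hTnonneg : ∀ n, 0 ≤ T n)
    (c c' c'' ℓ : ℝ) (hc : 0 < c) (hc' : 0 < c') (hc'' : 0 < c'') (hℓ : 1 ≤ ℓ)
    (n₀ : ℕ) (K : ℝ)
    (hbase : ∀ n ≤ n₀, T n ≤ K)
    (hrec : ∀ n : ℕ, n₀ < n →
      T n ≤ 2 * (4 : ℝ) ^ (c * Real.sqrt (ℓ * n)) *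
        (T (⌈(2 * (n : ℝ)) / 3⌉₊ + ⌈c' * Real.sqrt (ℓ * n)⌉₊) + c'' * n)) :
    ∃ C : ℝ, 0 < C ∧ ∀ n : ℕ, 2 ≤ n →
      T n ≤ (2 : ℝ) ^ (C * Real.sqrt (ℓ * n) * Real.log n) := by
  have hl2 : 0 < Real.log 2 := Real.log_pos (by norm_num)
  have hℓ0 : (0:ℝ) ≤ ℓ := by linarith
  set β : ℝ := Real.sqrt (3/4) with hβdef
  have hβpos : 0 < β := Real.sqrt_pos.mpr (by norm_num)
  have hβlt : β < 1 := by
    have : β < Real.sqrt 1 := Real.sqrt_lt_sqrt (by norm_num) (by norm_num)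
    simpa using this
  have hβ1 : 0 < 1 - β := by linarith
  set a : ℝ := c' * Real.sqrt ℓ with hadef
  have hapos : 0 < a := mul_pos hc' (Real.sqrt_pos.mpr (by linarith))
  set n₁ : ℕ := max (max n₀ 2) (max ⌈c''⌉₊ (⌈(24*a)^2⌉₊ + 48)) with hn₁def
  have hn₁2 : 2 ≤ n₁ := le_trans (le_max_right n₀ 2) (le_max_left _ _)
  have hn₀n₁ : n₀ ≤ n₁ := le_trans (le_max_left n₀ 2) (le_max_left _ _)
  have hne : (Finset.range (n₁+1)).Nonempty := ⟨0, by simp⟩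
  set K₁ : ℝ := max ((Finset.range (n₁+1)).sup' hne T) 1 with hK₁def
  have hK₁1 : (1:ℝ) ≤ K₁ := le_max_right _ _
  have hK₁pos : (0:ℝ) < K₁ := by linarith
  have hK₁le : ∀ n ≤ n₁, T n ≤ K₁ := by
    intro n hn
    refine le_trans (Finset.le_sup' T ?_) (le_max_left _ _)
    simp [Finset.mem_range]; omega
  set C : ℝ := max (max (Real.log K₁ / (Real.log 2)^2) (2 / (β * Real.log 2)))
      ((2 + 2*c) / ((1-β) * Real.log 2)) with hCdef
  have hC2 : 2 / (β * Real.log 2) ≤ C :=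
    le_trans (le_max_right _ _) (le_max_left _ _)
  have hC1 : Real.log K₁ / (Real.log 2)^2 ≤ C :=
    le_trans (le_max_left _ _) (le_max_left _ _)
  have hC3 : (2 + 2*c) / ((1-β) * Real.log 2) ≤ C := le_max_right _ _
  have hCpos : 0 < C := lt_of_lt_of_le (by positivity) hC2
  refine ⟨C, hCpos, ?_⟩
  intro n
  induction n using Nat.strong_induction_on with
  | _ n ih =>
  intro hn2
  have hn0 : 0 < n := by omega
  have hnR : (2:ℝ) ≤ (n:ℝ) := by exact_mod_cast hn2
  have hnpos : (0:ℝ) < (n:ℝ) := by linarith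
  have hs1 : 1 ≤ Real.sqrt (ℓ * n) := by
    have h1 : (1:ℝ) ≤ ℓ * n := by nlinarith
    have := Real.sqrt_le_sqrt h1
    simpa using this
  have hs0 : (0:ℝ) ≤ Real.sqrt (ℓ * n) := by linarith
  have hL2 : Real.log 2 ≤ Real.log n := Real.log_le_log (by norm_num) hnR
  have hL0 : (0:ℝ) ≤ Real.log n := by linarith
  by_cases hcase : n ≤ n₁
  · -- base case
    refine le_trans (hK₁le n hcase) ?_
    rw [Real.rpow_def_of_pos (by norm_num : (0:ℝ) < 2)]
    calc K₁ = Real.exp (Real.log K₁) := (Real.exp_log hK₁pos).symm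
      _ ≤ Real.exp (Real.log 2 * (C * Real.sqrt (ℓ * n) * Real.log n)) := by
          apply Real.exp_le_exp.mpr
          have h1 : Real.log K₁ ≤ C * (Real.log 2)^2 := by
            rw [div_le_iff₀ (by positivity)] at hC1
            linarith
          have hsL : Real.log 2 ≤ Real.sqrt (ℓ * n) * Real.log n := by
            nlinarith [mul_le_mul_of_nonneg_right hs1 hL0]
          nlinarith [mul_le_mul_of_nonneg_left hsL (mul_nonneg hCpos.le hl2.le)]
  · -- inductive step
    push_neg at hcase
    have hn₀n : n₀ < n := lt_of_le_of_lt hn₀n₁ hcase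
    set s : ℝ := Real.sqrt (ℓ * n) with hsdef
    set L : ℝ := Real.log n with hLdef
    set m : ℕ := ⌈(2 * (n : ℝ)) / 3⌉₊ + ⌈c' * s⌉₊ with hmdef
    -- numeric facts about n
    have hn₁cast : ((⌈(24*a)^2⌉₊ + 48 : ℕ) : ℝ) ≤ (n:ℝ) := by
      have : ⌈(24*a)^2⌉₊ + 48 ≤ n := le_trans (le_trans (le_max_right _ _) (le_max_right _ _)) hcase.le
      exact_mod_cast this
    have h24a2 : (24*a)^2 ≤ (n:ℝ) := by
      have := Nat.le_ceil ((24*a)^2)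
      push_cast at hn₁cast
      linarith
    have hn48 : (48:ℝ) ≤ (n:ℝ) := by
      push_cast at hn₁cast
      have : (0:ℝ) ≤ (⌈(24*a)^2⌉₊ : ℝ) := by positivity
      linarith
    have h24a : 24*a ≤ Real.sqrt n := by
      rw [show (24*a) = Real.sqrt ((24*a)^2) from (Real.sqrt_sq (by positivity)).symm]
      exact Real.sqrt_le_sqrt h24a2
    have hasn : a * Real.sqrt n ≤ (n:ℝ)/24 := by
      have h1 := mul_le_mul_of_nonneg_right h24a (Real.sqrt_nonneg (n:ℝ))
      have h2 := Real.mul_self_sqrt (le_of_lt hnpos)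
      linarith
    have hsmul : s = Real.sqrt ℓ * Real.sqrt n := Real.sqrt_mul hℓ0 _
    -- m ≤ 3/4 n
    have hm34 : (m:ℝ) ≤ (3/4) * n := by
      have hceil1 : (⌈(2*(n:ℝ))/3⌉₊ : ℝ) < 2*(n:ℝ)/3 + 1 := Nat.ceil_lt_add_one (by positivity)
      have hceil2 : (⌈c' * s⌉₊ : ℝ) < c' * s + 1 := Nat.ceil_lt_add_one (by positivity)
      have hcs : c' * s = a * Real.sqrt n := by rw [hsmul, hadef]; ring
      have : (m:ℝ) = (⌈(2*(n:ℝ))/3⌉₊ : ℝ) + (⌈c' * s⌉₊ : ℝ) := by push_cast [hmdef]; ring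
      rw [this]
      nlinarith [hceil1, hceil2, hasn, hn48, hcs]
    have hmlt : m < n := by
      have : (m:ℝ) < (n:ℝ) := by linarith
      exact_mod_cast this
    have hm2 : 2 ≤ m := by
      have h1 : (2:ℝ) ≤ 2*(n:ℝ)/3 := by linarith
      have h2 : ((2:ℕ):ℝ) ≤ (⌈(2*(n:ℝ))/3⌉₊ : ℝ) := le_trans (by exact_mod_cast h1) (Nat.le_ceil _)
      have h3 : 2 ≤ ⌈(2*(n:ℝ))/3⌉₊ := by exact_mod_cast h2
      omega
    have hmpos : (0:ℝ) < (m:ℝ) := by exact_mod_cast (by omega : 0 < m)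
    -- sqrt and log comparisons
    have hsm : Real.sqrt (ℓ * m) ≤ β * s := by
      have h1 : ℓ * m ≤ (3/4) * (ℓ * n) := by nlinarith
      calc Real.sqrt (ℓ * m) ≤ Real.sqrt ((3/4) * (ℓ * n)) := Real.sqrt_le_sqrt h1
        _ = β * s := Real.sqrt_mul (by norm_num) _
    have hlm : Real.log m ≤ L := Real.log_le_log hmpos (by exact_mod_cast hmlt.le)
    have hlm0 : (0:ℝ) ≤ Real.log m := Real.log_nonneg (by exact_mod_cast (by omega : 1 ≤ m))
    -- bound T m
    have hTm : T m ≤ (2:ℝ) ^ (C * (β * s) * L) := by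
      refine le_trans (ih m hmlt hm2) (Real.rpow_le_rpow_of_exponent_le one_le_two ?_)
      have h1 : C * Real.sqrt (ℓ * m) ≤ C * (β * s) :=
        mul_le_mul_of_nonneg_left hsm hCpos.le
      have h2 : (0:ℝ) ≤ C * (β * s) := by positivity
      calc C * Real.sqrt (ℓ * m) * Real.log m ≤ C * (β * s) * Real.log m :=
            mul_le_mul_of_nonneg_right h1 hlm0
        _ ≤ C * (β * s) * L := mul_le_mul_of_nonneg_left hlm h2
    -- bound c'' * n
    have hc''n : c'' * n ≤ (2:ℝ) ^ (C * (β * s) * L) := by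
      have hc''le : c'' ≤ (n:ℝ) := by
        have h1 : ⌈c''⌉₊ ≤ n :=
          le_trans (le_trans (le_max_left _ _) (le_max_right _ _)) hcase.le
        exact le_trans (Nat.le_ceil c'') (by exact_mod_cast h1)
      have hlog : Real.log (c'' * n) ≤ 2 * L := by
        rw [Real.log_mul (ne_of_gt hc'') (ne_of_gt hnpos)]
        have := Real.log_le_log hc'' hc''le
        linarith
      have hexp : 2 * L ≤ Real.log 2 * (C * (β * s) * L) := by
        have h1 : 2 ≤ C * (β * Real.log 2) := by
          rw [div_le_iff₀ (by positivity)] at hC2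
          linarith
        have hA : 2 * L ≤ (C * (β * Real.log 2)) * L := mul_le_mul_of_nonneg_right h1 hL0
        have hB : L ≤ s * L := le_mul_of_one_le_left hL0 hs1
        have hD : (C * (β * Real.log 2)) * L ≤ (C * (β * Real.log 2)) * (s * L) :=
          mul_le_mul_of_nonneg_left hB (by positivity)
        nlinarith [hA, hD]
      calc c'' * n = Real.exp (Real.log (c'' * n)) := (Real.exp_log (by positivity)).symm
        _ ≤ Real.exp (Real.log 2 * (C * (β * s) * L)) := Real.exp_le_exp.mpr (le_trans hlog hexp)
        _ = (2:ℝ) ^ (C * (β * s) * L) := (Real.rpow_def_of_pos (by norm_num) _).symm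
    -- put together
    have h22 : (2:ℝ) ^ (((2:ℕ)):ℝ) = 4 := by
      rw [Real.rpow_natCast]; norm_num
    have h4 : (4:ℝ) ^ (c * s) = (2:ℝ) ^ (2 * (c * s)) := by
      rw [← h22, ← Real.rpow_mul (by norm_num : (0:ℝ) ≤ 2)]
      norm_num
    have h22' : (2:ℝ) ^ ((2:ℝ)) = 4 := by
      rw [show ((2:ℝ)) = (((2:ℕ)):ℝ) by norm_num]; exact h22
    calc T n ≤ 2 * (4:ℝ) ^ (c * s) * (T m + c'' * n) := hrec n hn₀n
      _ ≤ 2 * (4:ℝ) ^ (c * s) * ((2:ℝ) ^ (C * (β * s) * L) + (2:ℝ) ^ (C * (β * s) * L)) := by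
          have h0 : (0:ℝ) ≤ 2 * (4:ℝ) ^ (c * s) := by positivity
          exact mul_le_mul_of_nonneg_left (add_le_add hTm hc''n) h0
      _ = (2:ℝ) ^ ((2:ℝ) + 2 * (c * s) + C * (β * s) * L) := by
          rw [Real.rpow_add (by norm_num : (0:ℝ) < 2), Real.rpow_add (by norm_num : (0:ℝ) < 2),
            h4, h22']
          ring
      _ ≤ (2:ℝ) ^ (C * s * L) := by
          apply Real.rpow_le_rpow_of_exponent_le one_le_two
          have h1 : (2 + 2*c) ≤ C * ((1-β) * Real.log 2) := by
            rw [div_le_iff₀ (by positivity)] at hC3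
            linarith
          nlinarith [mul_le_mul_of_nonneg_right h1 hs0,
            mul_le_mul_of_nonneg_right (mul_le_mul_of_nonneg_left hL2 (by positivity : (0:ℝ) ≤ C * (1-β))) hs0]
end

section
/- If a flat clustered graph C(G, T) contains a cycle ρ in G and a cluster μ with vertices of μ both strictly inside and strictly outside ρ but no vertex of μ on ρ, then C(G, T) is not c-planar. -/
open SimpleGraph

universe u

variable {V : Type u}

/-- A (straight-line) planar drawing of a graph: vertices are mapped to distinct
points of the plane and any two edge segments meet only in common endpoints. -/
def GoodDrawing (G : SimpleGraph V) (f : V → ℝ × ℝ) : Prop :=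
  Function.Injective f ∧
  ∀ u v x y : V, G.Adj u v → G.Adj x y → ({u, v} : Set V) ≠ {x, y} →
    segment ℝ (f u) (f v) ∩ segment ℝ (f x) (f y) ⊆
      (({f u, f v} : Set (ℝ × ℝ)) ∩ {f x, f y})

/-- A graph is planar if it admits a planar drawing. -/
def IsPlanarGraph (G : SimpleGraph V) : Prop := ∃ f, GoodDrawing G f

/-- The closed curve traced by a closed walk in a drawing. -/
def cycleCurve {G : SimpleGraph V} (f : V → ℝ × ℝ) {a : V} (ρ : G.Walk a a) :
    Set (ℝ × ℝ) :=
  {p | ∃ d ∈ ρ.darts, p ∈ segment ℝ (f d.toProd.1) (f d.toProd.2)}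

/-- `x` is enclosed by (strictly inside) the cycle `ρ` in the drawing `f`. -/
def Enclosed {G : SimpleGraph V} (f : V → ℝ × ℝ) {a : V} (ρ : G.Walk a a)
    (x : V) : Prop :=
  f x ∉ cycleCurve f ρ ∧
    Bornology.IsBounded (connectedComponentIn (cycleCurve f ρ)ᶜ (f x))

/-- `x` is strictly outside the cycle `ρ` in the drawing `f`. -/
def Outside {G : SimpleGraph V} (f : V → ℝ × ℝ) {a : V} (ρ : G.Walk a a)
    (x : V) : Prop :=
  f x ∉ cycleCurve f ρ ∧
    ¬ Bornology.IsBounded (connectedComponentIn (cycleCurve f ρ)ᶜ (f x))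

/-- A c-planar drawing of a flat clustered graph `(G, cl)`: a planar drawing `f`
of `G` together with, for each (inhabited) cluster, a simple closed region `R k`
(homeomorphic to a closed disc) containing the drawing of the cluster's induced
subgraph, such that regions of distinct clusters are disjoint and each edge meets
only the regions of the clusters of its endpoints. -/
def IsCPlanarDrawing (G : SimpleGraph V) (cl : V → ℕ) (f : V → ℝ × ℝ)
    (R : ℕ → Set (ℝ × ℝ)) : Prop :=
  GoodDrawing G f ∧
  (∀ k, (∃ v, cl v = k) →
    Nonempty (↥(R k) ≃ₜ ↥(Metric.closedBall (0 : ℝ × ℝ) 1))) ∧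
  (∀ v, f v ∈ R (cl v)) ∧
  (∀ u v, G.Adj u v → cl u = cl v → segment ℝ (f u) (f v) ⊆ R (cl u)) ∧
  (∀ j k, j ≠ k → (∃ v, cl v = j) → (∃ v, cl v = k) → Disjoint (R j) (R k)) ∧
  (∀ u v k, G.Adj u v → cl u ≠ k → cl v ≠ k → (∃ x, cl x = k) →
    Disjoint (segment ℝ (f u) (f v)) (R k))

/-- A flat clustered graph is c-planar if it admits a c-planar drawing. -/
def IsCPlanar (G : SimpleGraph V) (cl : V → ℕ) : Prop :=
  ∃ f R, IsCPlanarDrawing G cl f R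

/-- If a flat clustered graph contains a cycle `ρ` and a cluster
`μ` having vertices both strictly inside and strictly outside `ρ` but no vertex on
`ρ`, then it is not c-planar: no c-planar drawing realizes this situation. -/
theorem no_cplanar_with_cluster_separator (G : SimpleGraph V) (cl : V → ℕ)
    (f : V → ℝ × ℝ) (R : ℕ → Set (ℝ × ℝ))
    (hdraw : IsCPlanarDrawing G cl f R)
    {a : V} (ρ : G.Walk a a) (hρ : ρ.IsCycle) (μ : ℕ)
    (havoid : ∀ v ∈ ρ.support, cl v ≠ μ)
    (u w : V) (hu : cl u = μ) (hw : cl w = μ)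
    (hin : Enclosed f ρ u) (hout : Outside f ρ w) : False := by
  obtain ⟨hgood, hregion, hvert, hseg, hdisj, hedge⟩ := hdraw
  -- The cycle curve is disjoint from the cluster region R μ
  have hcurve : Disjoint (cycleCurve f ρ) (R μ) := by
    rw [Set.disjoint_left]
    rintro p ⟨d, hd, hp⟩ hpR
    have h1 := havoid d.toProd.1 (Walk.dart_fst_mem_support_of_mem_darts ρ hd)
    have h2 := havoid d.toProd.2 (Walk.dart_snd_mem_support_of_mem_darts ρ hd)
    exact Set.disjoint_left.mp
      (hedge d.toProd.1 d.toProd.2 μ d.adj h1 h2 ⟨u, hu⟩) hp hpR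
  -- R μ is connected
  obtain ⟨e⟩ := hregion μ ⟨u, hu⟩
  have hconn : IsConnected (R μ) := by
    have hball : IsConnected (Metric.closedBall (0 : ℝ × ℝ) 1) :=
      (convex_closedBall _ _).isConnected (by simp [Metric.nonempty_closedBall])
    have : ConnectedSpace ↥(Metric.closedBall (0 : ℝ × ℝ) 1) :=
      Subtype.connectedSpace hball
    have : ConnectedSpace ↥(R μ) := e.symm.surjective.connectedSpace e.symm.continuous
    exact isConnected_iff_connectedSpace.mpr this
  -- R μ lies in the complement of the curve, contains f u and f w
  have hsub : R μ ⊆ (cycleCurve f ρ)ᶜ := fun p hp hpc =>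
    Set.disjoint_left.mp hcurve hpc hp
  have hfu : f u ∈ R μ := hu ▸ hvert u
  have hfw : f w ∈ R μ := hw ▸ hvert w
  have hRsub : R μ ⊆ connectedComponentIn (cycleCurve f ρ)ᶜ (f u) :=
    hconn.isPreconnected.subset_connectedComponentIn hfu hsub
  have heq : connectedComponentIn (cycleCurve f ρ)ᶜ (f u)
      = connectedComponentIn (cycleCurve f ρ)ᶜ (f w) :=
    connectedComponentIn_eq (hRsub hfw)
  exact hout.2 (heq ▸ hin.2)
end
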